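/- Let p ∈ (1,∞) and δ ≥ 0. For every ε > 0 there exists a constant c_ε > 0 depending only on p and ε such that for all symmetric 3×3 real matrices P, Q, R one has (S(P) − S(Q))·(R − Q) ≤ ε·|F(P) − F(Q)|² + c_ε·|F(R) − F(Q)|². -/

import Mathlib

/-- 3×3 real matrices, represented as functions. -/
abbrev M3 : Type := Fin 3 → Fin 3 → ℝ

/-- Symmetric part `P^sym = (P + Pᵀ)/2`. -/
noncomputable def sym3 (P : M3) : M3 := fun i j => (P i j + P j i) / 2

/-- Frobenius norm. -/
noncomputable def frob3 (P : M3) : ℝ := Real.sqrt (∑ i, ∑ j, (P i j) ^ 2)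

/-- Frobenius inner product `A·B = ∑_{ij} A_{ij} B_{ij}`. -/
noncomputable def dotF (A B : M3) : ℝ := ∑ i, ∑ j, A i j * B i j

/-- The stress tensor `S(P) = (δ+|P^sym|)^{p−2} P^sym`. -/
noncomputable def Smat (p δ : ℝ) (P : M3) : M3 :=
  fun i j => (δ + frob3 (sym3 P)) ^ (p - 2) * sym3 P i j

/-- `F(P) = (δ+|P^sym|)^{(p−2)/2} P^sym`. -/
noncomputable def Fmat (p δ : ℝ) (P : M3) : M3 :=
  fun i j => (δ + frob3 (sym3 P)) ^ ((p - 2) / 2) * sym3 P i j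

/-!
On symmetric matrices `S = T_{p-2}` and `F = T_{(p-2)/2}`, where `T_σ x = (δ + |x|) ^ σ x`.
Put `s = p - 2 > -1`, `a = δ + |Q|`, `u = |P - Q|` and `v = |R - Q|`. The two basic estimates are
`|S P - S Q| ≲ (a + u) ^ s u` and `(a + u) ^ s u² ≲ |F P - F Q|²`; both are first proved with the
symmetric weight `(δ + |P| + |Q|) ^ s`, which is comparable to `(a + u) ^ s` up to the factor
`2 ^ |s|`. By Cauchy–Schwarz the left-hand side is then `≲ (a + u) ^ s u v`, and the Young-type
inequality `(a + u) ^ s u v ≤ e (a + u) ^ s u² + e ^ (-|s| - 1) (a + v) ^ s v²` for `0 < e ≤ 1`,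
which follows from the monotonicity of `t ↦ (a + t) ^ s t`, finishes the proof with `e` small.
-/

open Real

lemma rpow_le_rpow_abs_mul_rpow {s x y l : ℝ} (hx : 0 ≤ x) (hy : 0 ≤ y) (hl : 0 ≤ l)
    (hxy : x ≤ l * y) (hyx : y ≤ l * x) : x ^ s ≤ l ^ |s| * y ^ s := by
  rcases le_or_gt 0 s with hs | hs
  · calc x ^ s ≤ (l * y) ^ s := rpow_le_rpow hx hxy hs
      _ = l ^ |s| * y ^ s := by rw [mul_rpow hl hy, abs_of_nonneg hs]
  rcases hy.eq_or_lt with rfl | hy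
  · obtain rfl : x = 0 := by linarith
    simp [zero_rpow hs.ne]
  have hl : 0 < l := by nlinarith
  calc x ^ s ≤ (y / l) ^ s :=
        rpow_le_rpow_of_nonpos (by positivity) (by rwa [div_le_iff₀' hl]) hs.le
    _ = l ^ |s| * y ^ s := by rw [div_rpow hy.le hl.le, abs_of_neg hs, rpow_neg hl.le]; ring

lemma add_rpow_mul_le_add_rpow_mul {s a u w : ℝ} (hs : -1 < s) (ha : 0 ≤ a) (hu : 0 ≤ u)
    (huw : u ≤ w) : (a + u) ^ s * u ≤ (a + w) ^ s * w := by
  rcases le_or_gt 0 s with hs0 | hs0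
  · exact mul_le_mul (rpow_le_rpow (by positivity) (by linarith) hs0) huw hu
      (rpow_nonneg (by linarith) s)
  rcases (add_nonneg ha hu).eq_or_lt with h0 | h0
  · rw [show u = 0 by linarith, mul_zero]
    exact mul_nonneg (rpow_nonneg (by linarith) s) (by linarith)
  -- for `s < 0` both terms on the right are nondecreasing in `t`
  have hsplit : ∀ t, 0 < a + t → (a + t) ^ s * t = (a + t) ^ (s + 1) - a * (a + t) ^ s := by
    intro t ht
    rw [rpow_add_one ht.ne']; ring
  rw [hsplit u h0, hsplit w (by linarith)]
  have h1 := rpow_le_rpow h0.le (by linarith : a + u ≤ a + w) (by linarith : 0 ≤ s + 1)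
  have h2 := rpow_le_rpow_of_nonpos h0 (by linarith : a + u ≤ a + w) hs0.le
  nlinarith

lemma add_rpow_mul_mul_le {s a u v e : ℝ} (hs : -1 < s) (he : 0 < e) (he1 : e ≤ 1)
    (ha : 0 ≤ a) (hu : 0 ≤ u) (hv : 0 ≤ v) :
    (a + u) ^ s * u * v ≤ e * ((a + u) ^ s * u ^ 2) + e ^ (-|s| - 1) * ((a + v) ^ s * v ^ 2) := by
  have hrest : 0 ≤ e ^ (-|s| - 1) * ((a + v) ^ s * v ^ 2) := by positivity
  rcases le_or_gt v (e * u) with hvu | hvu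
  · have := mul_le_mul_of_nonneg_left hvu (by positivity : 0 ≤ (a + u) ^ s * u)
    nlinarith
  have huv : u ≤ v / e := by rw [le_div_iff₀ he]; linarith
  have hcomp : (a + v / e) ^ s ≤ e⁻¹ ^ |s| * (a + v) ^ s := by
    apply rpow_le_rpow_abs_mul_rpow (by positivity) (by positivity) (by positivity)
    · rw [inv_mul_eq_div, add_div]
      gcongr
      exact le_div_self ha he he1
    · have : v ≤ v / e := le_div_self hv he he1
      have : 1 ≤ e⁻¹ := one_le_inv_iff₀.2 ⟨he, he1⟩
      nlinarith
  calc (a + u) ^ s * u * v ≤ (a + v / e) ^ s * (v / e) * v := by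
        exact mul_le_mul_of_nonneg_right (add_rpow_mul_le_add_rpow_mul hs ha hu huv) hv
    _ ≤ e⁻¹ ^ |s| * (a + v) ^ s * (v / e) * v := by gcongr
    _ = e ^ (-|s| - 1) * ((a + v) ^ s * v ^ 2) := by
        rw [rpow_sub he, rpow_one, rpow_neg he.le, inv_rpow he.le]; ring
    _ ≤ _ := by nlinarith [mul_nonneg he.le (by positivity : 0 ≤ (a + u) ^ s * u ^ 2)]

lemma abs_rpow_sub_rpow_mul_le {s a b : ℝ} (hb : 0 < b) (hba : b ≤ a) (hab : a ≤ 2 * b) :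
    |a ^ s - b ^ s| * b ≤ |s| * 2 ^ |s| * a ^ s * (a - b) := by
  rcases hba.eq_or_lt with rfl | hba
  · simp
  obtain ⟨ξ, ⟨hbξ, hξa⟩, hξ⟩ := exists_hasDerivAt_eq_slope (fun x => x ^ s)
    (fun x => s * x ^ (s - 1)) hba
    (fun x hx => (continuousAt_rpow_const x s (.inl (hb.trans_le hx.1).ne')).continuousWithinAt)
    (fun x hx => hasDerivAt_rpow_const (.inl (hb.trans hx.1).ne'))
  have hξ0 : 0 < ξ := hb.trans hbξ
  have hdiff : a ^ s - b ^ s = s * ξ ^ (s - 1) * (a - b) := by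
    rw [hξ, div_mul_cancel₀ _ (sub_pos.2 hba).ne']
  have hξs : ξ ^ (s - 1) * b ≤ ξ ^ s := by
    calc ξ ^ (s - 1) * b ≤ ξ ^ (s - 1) * ξ := by gcongr
      _ = ξ ^ s := by rw [← rpow_add_one hξ0.ne', sub_add_cancel]
  have hξa' : ξ ^ s ≤ 2 ^ |s| * a ^ s :=
    rpow_le_rpow_abs_mul_rpow hξ0.le (by linarith) zero_le_two (by linarith) (by linarith)
  rw [hdiff, abs_mul, abs_mul, abs_of_pos (rpow_pos_of_pos hξ0 _), abs_of_pos (sub_pos.2 hba)]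
  calc |s| * ξ ^ (s - 1) * (a - b) * b = |s| * (ξ ^ (s - 1) * b) * (a - b) := by ring
    _ ≤ |s| * (2 ^ |s| * a ^ s) * (a - b) := by
        have := sub_nonneg.2 hba.le
        exact mul_le_mul_of_nonneg_right
          (mul_le_mul_of_nonneg_left (hξs.trans hξa') (abs_nonneg s)) this
    _ = _ := by ring

lemma abs_add_rpow_sub_add_rpow_mul_le {s δ α β : ℝ} (hs : -1 < s) (hδ : 0 ≤ δ) (hβ : 0 ≤ β)
    (hβα : β ≤ α) :
    |(δ + α) ^ s - (δ + β) ^ s| * β ≤ (|s| * 2 ^ |s| + 2) * (δ + α) ^ s * (α - β) := by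
  have hA : 0 ≤ (δ + α) ^ s := rpow_nonneg (by linarith) s
  have hB : 0 ≤ (δ + β) ^ s := rpow_nonneg (by linarith) s
  rcases le_or_gt (δ + α) (2 * (α - β)) with hfar | hnear
  · -- far apart: both terms are at most `(δ + α) ^ (s + 1)`
    have hpow : ∀ t : ℝ, 0 ≤ t → t ^ (s + 1) = t ^ s * t :=
      fun t ht => rpow_add_one' ht (by linarith)
    have h1 : (δ + α) ^ s * β ≤ (δ + α) ^ (s + 1) := by
      rw [hpow _ (by linarith)]; gcongr; linarith
    have h2 : (δ + β) ^ s * β ≤ (δ + α) ^ (s + 1) := by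
      calc (δ + β) ^ s * β ≤ (δ + β) ^ s * (δ + β) := by gcongr; linarith
        _ = (δ + β) ^ (s + 1) := (hpow _ (by linarith)).symm
        _ ≤ (δ + α) ^ (s + 1) := rpow_le_rpow (by linarith) (by linarith) (by linarith)
    have h3 : (δ + α) ^ (s + 1) ≤ 2 * (δ + α) ^ s * (α - β) := by
      rw [hpow _ (by linarith)]; nlinarith
    rw [← abs_of_nonneg hβ, ← abs_mul, sub_mul, abs_of_nonneg hβ]
    have hC : 0 ≤ |s| * 2 ^ |s| * (δ + α) ^ s * (α - β) := by
      have := sub_nonneg.2 hβα; positivity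
    refine abs_sub_le_iff.2 ⟨?_, ?_⟩ <;> nlinarith [mul_nonneg hA hβ, mul_nonneg hB hβ]
  · have hβ' : β ≤ δ + β := by linarith
    have := abs_rpow_sub_rpow_mul_le (s := s) (a := δ + α) (b := δ + β) (by linarith)
      (by linarith) (by linarith)
    calc |(δ + α) ^ s - (δ + β) ^ s| * β ≤ |(δ + α) ^ s - (δ + β) ^ s| * (δ + β) := by gcongr
      _ ≤ |s| * 2 ^ |s| * (δ + α) ^ s * (δ + α - (δ + β)) := this
      _ ≤ _ := by
        rw [add_sub_add_left_eq_sub]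
        nlinarith [mul_nonneg hA (sub_nonneg.2 hβα)]

lemma min_mul_add_rpow_mul_le {σ δ α β : ℝ} (hσ : -1 < σ) (hδ : 0 ≤ δ) (hβ : 0 ≤ β)
    (hβα : β ≤ α) :
    min (σ + 1) 1 * (δ + α) ^ σ * (α - β) ≤ (δ + α) ^ σ * α - (δ + β) ^ σ * β := by
  have hA : 0 ≤ (δ + α) ^ σ := rpow_nonneg (by linarith) σ
  have hαβ := sub_nonneg.2 hβα
  rcases le_or_gt 0 σ with hσ0 | hσ0
  · have := rpow_le_rpow (by linarith) (by linarith : δ + β ≤ δ + α) hσ0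
    nlinarith [min_le_right (σ + 1) 1, mul_nonneg hA hαβ, mul_le_mul_of_nonneg_right this hβ]
  rw [min_eq_left (by linarith)]
  rcases (by linarith : 0 ≤ δ + α).eq_or_lt with hA0 | hA0
  · obtain rfl : α = β := by linarith
    simp
  set A := δ + α
  set B := δ + β
  have hpow : ∀ t : ℝ, 0 ≤ t → t ^ (σ + 1) = t ^ σ * t :=
    fun t ht => rpow_add_one' ht (by linarith)
  -- concavity of `t ↦ t ^ (σ + 1)`, via Bernoulli's inequality
  have hconc : B ^ (σ + 1) ≤ A ^ σ * A + (σ + 1) * A ^ σ * (B - A) := by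
    have hge : -1 ≤ (B - A) / A := by rw [le_div_iff₀ hA0]; linarith
    have hbern := rpow_one_add_le_one_add_mul_self hge (by linarith : 0 ≤ σ + 1)
      (by linarith : σ + 1 ≤ 1)
    have hBA : B = A * (1 + (B - A) / A) := by field_simp; ring
    calc B ^ (σ + 1) = A ^ (σ + 1) * (1 + (B - A) / A) ^ (σ + 1) := by
          rw [← mul_rpow hA0.le (by linarith), ← hBA]
      _ ≤ A ^ (σ + 1) * (1 + (σ + 1) * ((B - A) / A)) := by gcongr
      _ = A ^ σ * A + (σ + 1) * A ^ σ * (B - A) := by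
          rw [hpow A hA0.le]; field_simp
  have hδB : δ * A ^ σ ≤ δ * B ^ σ := by
    rcases hδ.eq_or_lt with rfl | hδ0
    · simp
    exact mul_le_mul_of_nonneg_left
      (rpow_le_rpow_of_nonpos (by positivity) (by linarith) hσ0.le) hδ
  have hαA : A ^ σ * α = A ^ σ * A - δ * A ^ σ := by simp only [A]; ring
  have hβB : B ^ σ * β = B ^ (σ + 1) - δ * B ^ σ := by
    rw [hpow B (by positivity)]; simp only [B]; ring
  nlinarith

lemma add_norm_add_norm_rpow_comparable {E : Type*} [SeminormedAddCommGroup E] {s δ : ℝ}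
    (hδ : 0 ≤ δ) (x y : E) :
    (δ + ‖x‖ + ‖y‖) ^ s ≤ 2 ^ |s| * (δ + ‖y‖ + ‖x - y‖) ^ s ∧
      (δ + ‖y‖ + ‖x - y‖) ^ s ≤ 2 ^ |s| * (δ + ‖x‖ + ‖y‖) ^ s := by
  have h₁ := norm_le_norm_add_norm_sub' x y
  have h₂ := norm_sub_le x y
  have := norm_nonneg x
  have := norm_nonneg y
  have := norm_nonneg (x - y)
  constructor <;> apply rpow_le_rpow_abs_mul_rpow <;> first | positivity | linarith

section NormedSpace

variable {E : Type*} [SeminormedAddCommGroup E] [NormedSpace ℝ E]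

noncomputable def shiftedPow (σ δ : ℝ) (x : E) : E := (δ + ‖x‖) ^ σ • x

lemma norm_shiftedPow_sub_le {s δ : ℝ} (hs : -1 < s) (hδ : 0 ≤ δ) (x y : E) :
    ‖shiftedPow s δ x - shiftedPow s δ y‖
      ≤ (|s| * 2 ^ |s| + 3) * 2 ^ |s| * (δ + ‖x‖ + ‖y‖) ^ s * ‖x - y‖ := by
  wlog hyx : ‖y‖ ≤ ‖x‖ generalizing x y
  · simpa only [norm_sub_rev, add_right_comm] using this y x (le_of_not_ge hyx)
  have hA : 0 ≤ (δ + ‖x‖) ^ s := by positivity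
  have hsplit : shiftedPow s δ x - shiftedPow s δ y
      = (δ + ‖x‖) ^ s • (x - y) + ((δ + ‖x‖) ^ s - (δ + ‖y‖) ^ s) • y := by
    simp only [shiftedPow, smul_sub, sub_smul]; abel
  have hterm := abs_add_rpow_sub_add_rpow_mul_le hs hδ (norm_nonneg y) hyx
  have hnorm : ‖x‖ - ‖y‖ ≤ ‖x - y‖ := norm_sub_norm_le x y
  have hcomp : (δ + ‖x‖) ^ s ≤ 2 ^ |s| * (δ + ‖x‖ + ‖y‖) ^ s :=
    rpow_le_rpow_abs_mul_rpow (by positivity) (by positivity) zero_le_two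
      (by linarith [norm_nonneg x, norm_nonneg y]) (by linarith [norm_nonneg y])
  have h1 : ‖shiftedPow s δ x - shiftedPow s δ y‖
      ≤ (|s| * 2 ^ |s| + 3) * (δ + ‖x‖) ^ s * ‖x - y‖ := by
    rw [hsplit]
    refine (norm_add_le _ _).trans ?_
    rw [norm_smul, norm_smul, norm_of_nonneg hA, norm_eq_abs]
    have : 0 ≤ |s| * 2 ^ |s| := by positivity
    nlinarith [mul_le_mul_of_nonneg_left hnorm hA, mul_nonneg hA (norm_nonneg (x - y))]
  calc _ ≤ (|s| * 2 ^ |s| + 3) * (δ + ‖x‖) ^ s * ‖x - y‖ := h1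
    _ ≤ (|s| * 2 ^ |s| + 3) * (2 ^ |s| * (δ + ‖x‖ + ‖y‖) ^ s) * ‖x - y‖ := by gcongr
    _ = _ := by ring

lemma exists_norm_shiftedPow_sub_le {s : ℝ} (hs : -1 < s) :
    ∃ C, 0 < C ∧ ∀ δ, 0 ≤ δ → ∀ x y : E,
      ‖shiftedPow s δ x - shiftedPow s δ y‖ ≤ C * (δ + ‖y‖ + ‖x - y‖) ^ s * ‖x - y‖ := by
  refine ⟨(|s| * 2 ^ |s| + 3) * 2 ^ |s| * 2 ^ |s|, by positivity, fun δ hδ x y => ?_⟩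
  calc _ ≤ (|s| * 2 ^ |s| + 3) * 2 ^ |s| * (δ + ‖x‖ + ‖y‖) ^ s * ‖x - y‖ :=
        norm_shiftedPow_sub_le hs hδ x y
    _ ≤ (|s| * 2 ^ |s| + 3) * 2 ^ |s| * (2 ^ |s| * (δ + ‖y‖ + ‖x - y‖) ^ s) * ‖x - y‖ := by
        gcongr; exact (add_norm_add_norm_rpow_comparable hδ x y).1
    _ = _ := by ring

end NormedSpace

section InnerProductSpace

variable {E : Type*} [NormedAddCommGroup E] [InnerProductSpace ℝ E]

lemma min_mul_rpow_mul_norm_sub_le {σ δ : ℝ} (hσ : -1 < σ) (hδ : 0 ≤ δ) (x y : E) :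
    min (σ + 1) 1 * (δ + ‖x‖ + ‖y‖) ^ σ * ‖x - y‖
      ≤ 2 * 2 ^ |σ| * ‖shiftedPow σ δ x - shiftedPow σ δ y‖ := by
  wlog hyx : ‖y‖ ≤ ‖x‖ generalizing x y
  · simpa only [norm_sub_rev, add_right_comm] using this y x (le_of_not_ge hyx)
  have hA : 0 ≤ (δ + ‖x‖) ^ σ := by positivity
  have hB : 0 ≤ (δ + ‖y‖) ^ σ := by positivity
  have hmono := min_mul_add_rpow_mul_le hσ hδ (norm_nonneg y) hyx
  have hcomp := rpow_le_rpow_abs_mul_rpow (s := σ) (by positivity : 0 ≤ δ + ‖x‖ + ‖y‖)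
    (by positivity : 0 ≤ δ + ‖x‖) zero_le_two (by linarith [norm_nonneg y])
    (by linarith [norm_nonneg y])
  have ht := abs_real_inner_le_norm x y
  have hxy := norm_sub_sq_real x y
  have hT : ‖shiftedPow σ δ x - shiftedPow σ δ y‖ ^ 2 = ((δ + ‖x‖) ^ σ) ^ 2 * ‖x‖ ^ 2
      - 2 * ((δ + ‖x‖) ^ σ * (δ + ‖y‖) ^ σ) * inner ℝ x y + ((δ + ‖y‖) ^ σ) ^ 2 * ‖y‖ ^ 2 := by
    rw [shiftedPow, shiftedPow, norm_sub_sq_real, norm_smul, norm_smul, inner_smul_left,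
      inner_smul_right, norm_of_nonneg hA, norm_of_nonneg hB]
    simp only [conj_trivial]; ring
  have hm : 0 < min (σ + 1) 1 := lt_min (by linarith) one_pos
  have hm1 : min (σ + 1) 1 ≤ 1 := min_le_right _ _
  have hβ : 0 ≤ ‖y‖ := norm_nonneg y
  have h2σ : (0:ℝ) ≤ 2 ^ |σ| := by positivity
  have hD : 0 ≤ (δ + ‖x‖ + ‖y‖) ^ σ := by positivity
  have hcA : min (σ + 1) 1 * (δ + ‖x‖ + ‖y‖) ^ σ
      ≤ 2 ^ |σ| * (min (σ + 1) 1 * (δ + ‖x‖) ^ σ) := by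
    nlinarith [mul_le_mul_of_nonneg_left hcomp hm.le]
  have hc : 0 ≤ min (σ + 1) 1 * (δ + ‖x‖ + ‖y‖) ^ σ := mul_nonneg hm.le hD
  generalize min (σ + 1) 1 * (δ + ‖x‖ + ‖y‖) ^ σ = c at hcA hc ⊢
  generalize (δ + ‖x‖) ^ σ = A at *
  generalize (δ + ‖y‖) ^ σ = B at *
  generalize (2:ℝ) ^ |σ| = L at *
  generalize min (σ + 1) 1 = m at *
  clear hD hcomp
  generalize ‖x‖ = α at *
  generalize ‖y‖ = β at *
  generalize inner ℝ x y = t at *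
  -- Both squared sides are affine in `t = ⟪x, y⟫ ∈ [-α β, α β]`, so it suffices to compare
  -- them at the endpoints.
  have hαβ := sub_nonneg.2 hyx
  have hend₁ : c * (α - β) ≤ 2 * L * (A * α - B * β) := by
    have hmA : 0 ≤ m * A * (α - β) := by positivity
    calc c * (α - β) ≤ L * (m * A) * (α - β) := by gcongr
      _ = L * (m * A * (α - β)) := by ring
      _ ≤ L * (A * α - B * β) := by gcongr
      _ ≤ 2 * L * (A * α - B * β) := by nlinarith
  have hend₂ : c * (α + β) ≤ 2 * L * (A * α + B * β) := by
    have : m * A ≤ A := mul_le_of_le_one_left hA hm1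
    have hαβ' : 0 ≤ α + β := by linarith
    calc c * (α + β) ≤ L * (m * A) * (α + β) := by gcongr
      _ ≤ L * A * (2 * α) := by gcongr; linarith
      _ ≤ 2 * L * (A * α + B * β) := by nlinarith [mul_nonneg hB hβ]
  rw [← pow_le_pow_iff_left₀ (by positivity) (by positivity) two_ne_zero, mul_pow c,
    mul_pow (2 * L), hxy, hT]
  have h₁ := pow_le_pow_left₀ (mul_nonneg hc hαβ) hend₁ 2
  have h₂ := pow_le_pow_left₀ (mul_nonneg hc (by linarith)) hend₂ 2
  rcases le_total (c ^ 2) ((2 * L) ^ 2 * (A * B)) with h | h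
  · nlinarith [le_abs_self t]
  · nlinarith [neg_abs_le t]

lemma exists_rpow_mul_sq_le_norm_shiftedPow_sub {s : ℝ} (hs : -2 < s) :
    ∃ C, 0 < C ∧ ∀ δ, 0 ≤ δ → ∀ x y : E,
      (δ + ‖y‖ + ‖x - y‖) ^ s * ‖x - y‖ ^ 2
        ≤ C * ‖shiftedPow (s / 2) δ x - shiftedPow (s / 2) δ y‖ ^ 2 := by
  have hσ : -1 < s / 2 := by linarith
  set m := min (s / 2 + 1) 1
  have hm : 0 < m := lt_min (by linarith) one_pos
  refine ⟨2 ^ |s| * (2 * 2 ^ |s / 2|) ^ 2 / m ^ 2, by positivity, fun δ hδ x y => ?_⟩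
  have hD : 0 ≤ δ + ‖x‖ + ‖y‖ := by positivity
  have hsq : (m * (δ + ‖x‖ + ‖y‖) ^ (s / 2) * ‖x - y‖) ^ 2
      ≤ (2 * 2 ^ |s / 2| * ‖shiftedPow (s / 2) δ x - shiftedPow (s / 2) δ y‖) ^ 2 :=
    pow_le_pow_left₀ (by positivity) (min_mul_rpow_mul_norm_sub_le hσ hδ x y) 2
  have hpow : ((δ + ‖x‖ + ‖y‖) ^ (s / 2)) ^ 2 = (δ + ‖x‖ + ‖y‖) ^ s := by
    rw [← rpow_mul_natCast hD]; norm_num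
  rw [mul_pow, mul_pow, hpow] at hsq
  calc _ ≤ 2 ^ |s| * (δ + ‖x‖ + ‖y‖) ^ s * ‖x - y‖ ^ 2 := by
        gcongr; exact (add_norm_add_norm_rpow_comparable hδ x y).2
    _ ≤ 2 ^ |s| * ((2 * 2 ^ |s / 2| * ‖shiftedPow (s / 2) δ x - shiftedPow (s / 2) δ y‖) ^ 2
          / m ^ 2) := by
        rw [mul_assoc]; gcongr; rw [le_div_iff₀ (by positivity)]; linarith
    _ = _ := by ring

theorem exists_inner_shiftedPow_sub_le {p ε : ℝ} (hp : 1 < p) (hε : 0 < ε) :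
    ∃ c, 0 < c ∧ ∀ δ, 0 ≤ δ → ∀ x y z : E,
      inner ℝ (shiftedPow (p - 2) δ x - shiftedPow (p - 2) δ y) (z - y)
        ≤ ε * ‖shiftedPow ((p - 2) / 2) δ x - shiftedPow ((p - 2) / 2) δ y‖ ^ 2
          + c * ‖shiftedPow ((p - 2) / 2) δ z - shiftedPow ((p - 2) / 2) δ y‖ ^ 2 := by
  have hs : -1 < p - 2 := by linarith
  obtain ⟨C₁, hC₁, hupper⟩ := exists_norm_shiftedPow_sub_le (E := E) hs
  obtain ⟨C₂, hC₂, hlower⟩ :=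
    exists_rpow_mul_sq_le_norm_shiftedPow_sub (E := E) (by linarith : -2 < p - 2)
  set e := min 1 (ε / (C₁ * C₂))
  have he : 0 < e := lt_min one_pos (by positivity)
  have heε : C₁ * C₂ * e ≤ ε := by
    rw [mul_comm, ← le_div_iff₀ (by positivity)]; exact min_le_right _ _
  refine ⟨C₁ * C₂ * e ^ (-|p - 2| - 1), by positivity, fun δ hδ x y z => ?_⟩
  have hyoung := add_rpow_mul_mul_le hs he (min_le_left _ _) (by positivity : 0 ≤ δ + ‖y‖)
    (norm_nonneg (x - y)) (norm_nonneg (z - y))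
  set S := shiftedPow (E := E) (p - 2) δ
  set F := shiftedPow (E := E) ((p - 2) / 2) δ
  calc _ ≤ ‖S x - S y‖ * ‖z - y‖ := real_inner_le_norm _ _
    _ ≤ C₁ * ((δ + ‖y‖ + ‖x - y‖) ^ (p - 2) * ‖x - y‖ * ‖z - y‖) := by
        rw [← mul_assoc, ← mul_assoc]; gcongr; exact hupper δ hδ x y
    _ ≤ C₁ * (e * ((δ + ‖y‖ + ‖x - y‖) ^ (p - 2) * ‖x - y‖ ^ 2)
          + e ^ (-|p - 2| - 1) * ((δ + ‖y‖ + ‖z - y‖) ^ (p - 2) * ‖z - y‖ ^ 2)) := by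
        gcongr
    _ ≤ C₁ * (e * (C₂ * ‖F x - F y‖ ^ 2) + e ^ (-|p - 2| - 1) * (C₂ * ‖F z - F y‖ ^ 2)) := by
        gcongr C₁ * (e * ?_ + _ * ?_)
        · exact hlower δ hδ x y
        · exact hlower δ hδ z y
    _ ≤ _ := by nlinarith [sq_nonneg ‖F x - F y‖]

end InnerProductSpace

noncomputable def toEuclidean3 : M3 ≃ₗ[ℝ] EuclideanSpace ℝ (Fin 3 × Fin 3) :=
  (LinearEquiv.curry ℝ ℝ (Fin 3) (Fin 3)).symm.trans (WithLp.linearEquiv 2 ℝ _).symm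

lemma frob3_eq_norm (A : M3) : frob3 A = ‖toEuclidean3 A‖ := by
  rw [EuclideanSpace.norm_eq, frob3, Fintype.sum_prod_type]
  simp [toEuclidean3, sq_abs]

lemma dotF_eq_inner (A B : M3) : dotF A B = inner ℝ (toEuclidean3 A) (toEuclidean3 B) := by
  rw [dotF, PiLp.inner_apply, Fintype.sum_prod_type]
  simp [toEuclidean3, mul_comm]

lemma toEuclidean3_Smat (p δ : ℝ) (P : M3) :
    toEuclidean3 (Smat p δ P) = shiftedPow (p - 2) δ (toEuclidean3 (sym3 P)) := by
  rw [shiftedPow, ← frob3_eq_norm, ← map_smul]; rfl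

lemma toEuclidean3_Fmat (p δ : ℝ) (P : M3) :
    toEuclidean3 (Fmat p δ P) = shiftedPow ((p - 2) / 2) δ (toEuclidean3 (sym3 P)) := by
  rw [shiftedPow, ← frob3_eq_norm, ← map_smul]; rfl

lemma sym3_eq_self {P : M3} (hP : ∀ i j, P i j = P j i) : sym3 P = P := by
  funext i j
  rw [sym3, hP j i, add_self_div_two]

/-- For `p ∈ (1,∞)` and every `ε > 0` there exists `c_ε > 0` depending only on `p`
and `ε` such that for all `δ ≥ 0` and all symmetric 3×3 matrices `P, Q, R`:
`(S(P)−S(Q))·(R−Q) ≤ ε·|F(P)−F(Q)|² + c_ε·|F(R)−F(Q)|²`. -/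
theorem quasinorm_trick (p : ℝ) (hp : 1 < p) (ε : ℝ) (hε : 0 < ε) :
    ∃ c : ℝ, 0 < c ∧
      ∀ δ : ℝ, 0 ≤ δ → ∀ P Q R : M3,
        (∀ i j, P i j = P j i) → (∀ i j, Q i j = Q j i) → (∀ i j, R i j = R j i) →
        dotF (Smat p δ P - Smat p δ Q) (R - Q)
          ≤ ε * (frob3 (Fmat p δ P - Fmat p δ Q)) ^ 2
            + c * (frob3 (Fmat p δ R - Fmat p δ Q)) ^ 2 := by
  obtain ⟨c, hc, h⟩ :=
    exists_inner_shiftedPow_sub_le (E := EuclideanSpace ℝ (Fin 3 × Fin 3)) hp hε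
  refine ⟨c, hc, fun δ hδ P Q R _ hQ hR => ?_⟩
  have hRQ : R - Q = sym3 R - sym3 Q := by rw [sym3_eq_self hR, sym3_eq_self hQ]
  rw [hRQ, dotF_eq_inner, frob3_eq_norm, frob3_eq_norm]
  simp only [map_sub, toEuclidean3_Smat, toEuclidean3_Fmat]
  exact h δ hδ _ _ _
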